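/- arXiv:2310.19100 — 3 statements merged into one kernel-verified Lean document; each statement's English description precedes it below -/
import Mathlib

section
/- With D > 0 and I > 0, define Δ1^(ij) = I/(1 + 10^(-D/600)), D1^(ij) = D - 2Δ1^(ij), Δ2^(ij) = I/(1 + 10^(D1^(ij)/600)); and Δ1^(ji) = I/(1 + 10^(D/600)), D1^(ji) = D + 2Δ1^(ji), Δ2^(ji) = I/(1 + 10^(-D1^(ji)/600)). Then Δ1^(ij) < Δ2^(ji). -/
theorem elo_delta1_lt_delta2 (D I : ℝ) (hD : 0 < D) (hI : 0 < I) :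
    I / (1 + (10:ℝ) ^ (-D / 600)) <
    I / (1 + (10:ℝ) ^ (-(D + 2 * (I / (1 + (10:ℝ) ^ (D / 600)))) / 600)) := by
  have h10 : (1:ℝ) < 10 := by norm_num
  have hpos : ∀ x : ℝ, (0:ℝ) < (10:ℝ) ^ x := fun x =>
    Real.rpow_pos_of_pos (by norm_num) x
  have hΔ : 0 < I / (1 + (10:ℝ) ^ (D / 600)) := by
    apply div_pos hI
    positivity
  have hexp : -(D + 2 * (I / (1 + (10:ℝ) ^ (D / 600)))) / 600 < -D / 600 := by
    apply div_lt_div_of_pos_right _ (by norm_num)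
    linarith
  have hlt : (10:ℝ) ^ (-(D + 2 * (I / (1 + (10:ℝ) ^ (D / 600)))) / 600) <
      (10:ℝ) ^ (-D / 600) := Real.rpow_lt_rpow_left_iff h10 |>.mpr hexp
  apply div_lt_div_of_pos_left hI
  · positivity
  · linarith
end

section
/- With D > 0 and I > 0, define Δ1^(ij) = I/(1 + 10^(-D/600)), D1^(ij) = D - 2Δ1^(ij), Δ2^(ij) = I/(1 + 10^(D1^(ij)/600)); and Δ1^(ji) = I/(1 + 10^(D/600)). Then Δ2^(ij) > Δ1^(ji). -/
theorem elo_delta2_gt_delta1 (D I : ℝ) (hD : 0 < D) (hI : 0 < I) :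
    I / (1 + (10:ℝ) ^ ((D - 2 * (I / (1 + (10:ℝ) ^ (-D / 600)))) / 600)) >
    I / (1 + (10:ℝ) ^ (D / 600)) := by
  have h1 : (0:ℝ) < 1 + (10:ℝ) ^ (-D/600) := by positivity
  have h2 : (D - 2 * (I / (1 + (10:ℝ) ^ (-D / 600)))) / 600 < D / 600 := by
    have : 0 < I / (1 + (10:ℝ) ^ (-D/600)) := by positivity
    linarith
  have h3 : (10:ℝ) ^ ((D - 2 * (I / (1 + (10:ℝ) ^ (-D / 600)))) / 600) < (10:ℝ) ^ (D/600) :=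
    (Real.rpow_lt_rpow_left_iff (by norm_num)).mpr h2
  have h4 : (0:ℝ) < 1 + (10:ℝ) ^ ((D - 2 * (I / (1 + (10:ℝ) ^ (-D / 600)))) / 600) := by
    positivity
  exact div_lt_div_of_pos_left hI h4 (by linarith)
end

section
/- With D > 0 and I > 0, the net change experienced by the underdog over two split games depends on the order: Δ^(ij) := Δ1^(ij) - Δ2^(ij) < Δ^(ji) := -Δ1^(ji) + Δ2^(ji), where Δ1^(ij) = I/(1 + 10^(-D/600)), Δ2^(ij) = I/(1 + 10^((D - 2Δ1^(ij))/600)), Δ1^(ji) = I/(1 + 10^(D/600)), Δ2^(ji) = I/(1 + 10^(-(D + 2Δ1^(ji))/600)). That is, the final rating gap is strictly smaller when the underdog wins the second game rather than the first. -/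
theorem elo_order_matters (D I : ℝ) (hD : 0 < D) (hI : 0 < I) :
    I / (1 + (10:ℝ) ^ (-D / 600)) -
      I / (1 + (10:ℝ) ^ ((D - 2 * (I / (1 + (10:ℝ) ^ (-D / 600)))) / 600)) <
    -(I / (1 + (10:ℝ) ^ (D / 600))) +
      I / (1 + (10:ℝ) ^ (-(D + 2 * (I / (1 + (10:ℝ) ^ (D / 600)))) / 600)) := by
  have h10 : (1:ℝ) < 10 := by norm_num
  have key : ∀ x : ℝ, I / (1 + (10:ℝ) ^ (x / 600)) = I - I / (1 + (10:ℝ) ^ (-x / 600)) := by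
    intro x
    have hp : (0:ℝ) < (10:ℝ) ^ (x / 600) := Real.rpow_pos_of_pos (by norm_num) _
    have hq : (0:ℝ) < (10:ℝ) ^ (-x / 600) := Real.rpow_pos_of_pos (by norm_num) _
    have hinv : (10:ℝ) ^ (-x / 600) = ((10:ℝ) ^ (x / 600))⁻¹ := by
      rw [← Real.rpow_neg (by norm_num : (0:ℝ) ≤ 10)]
      ring_nf
    have h1 : 1 + (10:ℝ) ^ (x / 600) ≠ 0 := by positivity
    have h2 : 1 + (10:ℝ) ^ (-x / 600) ≠ 0 := by positivity
    rw [hinv] at h2 ⊢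
    field_simp
    ring
  set A := I / (1 + (10:ℝ) ^ (-D / 600)) with hA
  set B := I / (1 + (10:ℝ) ^ (D / 600)) with hB
  have hApos : 0 < A := by
    have : (0:ℝ) < (10:ℝ) ^ (-D / 600) := Real.rpow_pos_of_pos (by norm_num) _
    positivity
  have hBpos : 0 < B := by
    have : (0:ℝ) < (10:ℝ) ^ (D / 600) := Real.rpow_pos_of_pos (by norm_num) _
    positivity
  have hAB : B = I - A := key D
  have hexp : -(D + 2 * B) / 600 < -(D - 2 * A) / 600 := by
    have : -(D + 2 * B) < -(D - 2 * A) := by linarith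
    linarith
  have hmono : (10:ℝ) ^ (-(D + 2 * B) / 600) < (10:ℝ) ^ (-(D - 2 * A) / 600) :=
    Real.rpow_lt_rpow_left_iff h10 |>.mpr hexp
  have hppos : (0:ℝ) < (10:ℝ) ^ (-(D + 2 * B) / 600) := Real.rpow_pos_of_pos (by norm_num) _
  have hdiv : I / (1 + (10:ℝ) ^ (-(D - 2 * A) / 600)) <
      I / (1 + (10:ℝ) ^ (-(D + 2 * B) / 600)) := by
    apply div_lt_div_of_pos_left hI (by linarith) (by linarith)
  rw [key (D - 2 * A)]
  linarith
end
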